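/- arXiv:2603.17649 — 3 statements merged into one kernel-verified Lean document; each statement's English description precedes it below -/
import Mathlib

section
/- Let q : V → k be an anisotropic quadratic form over a field k, and let s, t be independent indeterminates over k. Then over the rational function field K = k(s,t), the quadratic form q_K ⊕ s·q_K does not represent the element t. -/
/-!
Suppose `q x + s q y = t` over `k(s,t)`. Clearing denominators (in coordinates) gives
`q P + s q Q = t E²` with `P, Q, E` polynomial in `s, t` and `E ≠ 0`.

Over `k[s]` the form `q ⊥ s q` is still anisotropic (Springer's argument): for a nonzero
polynomial vector `c`, the top coefficient of `q c` is `q` of the top coefficients of `c`, so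
`q c` has even degree in `s`, while `s q c` has odd degree.

Now read the equation in `k[s][t]`. Setting `t = 0` and using this anisotropy gives
`t ∣ P, Q`; then `t ∣ E`, and dividing by `t²` gives an equation of the same shape with `E/t`.
Hence `E` is divisible by every power of `t`, so `E = 0`.
-/

open Matrix Polynomial TensorProduct

namespace Matrix

variable {ι R S : Type*} [Fintype ι] [DecidableEq ι]

theorem toQuadraticForm'_apply [CommRing R] (N : Matrix ι ι R) (v : ι → R) :
    N.toQuadraticForm' v = v ⬝ᵥ N *ᵥ v :=
  toLinearMap₂'_apply' N v v

theorem map_toQuadraticForm' [CommRing R] [CommRing S] (f : R →+* S) (N : Matrix ι ι R)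
    (v : ι → R) : f (N.toQuadraticForm' v) = (N.map f).toQuadraticForm' (f ∘ v) := by
  simp only [toQuadraticForm'_apply, RingHom.map_dotProduct]
  congr 1
  ext i
  exact RingHom.map_mulVec f N v i

theorem toQuadraticForm'_smul [CommRing R] (c : R) (N : Matrix ι ι R) (v : ι → R) :
    (c • N).toQuadraticForm' v = c * N.toQuadraticForm' v := by
  simp only [toQuadraticForm'_apply, smul_mulVec, dotProduct_smul, smul_eq_mul]

theorem toQuadraticForm'_fromBlocks_zero [CommRing R] (A D : Matrix ι ι R) (u v : ι → R) :
    (fromBlocks A 0 0 D).toQuadraticForm' (Sum.elim u v) =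
      A.toQuadraticForm' u + D.toQuadraticForm' v := by
  simp [toQuadraticForm'_apply, fromBlocks_mulVec, Function.comp_def]

theorem exists_toQuadraticForm'_eq_mul_sq_of_map {A K : Type*} [CommRing A] [Nontrivial A]
    [CommRing K] [Algebra A K] [IsFractionRing A K] (N : Matrix ι ι A) {z : ι → K} {a : A}
    (h : (N.map (algebraMap A K)).toQuadraticForm' z = algebraMap A K a) :
    ∃ (P : ι → A) (d : A), d ≠ 0 ∧ N.toQuadraticForm' P = a * d ^ 2 := by
  obtain ⟨d, hd⟩ := IsLocalization.exist_integer_multiples_of_finite (nonZeroDivisors A) z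
  choose P hP using hd
  refine ⟨P, d, nonZeroDivisors.coe_ne_zero d, IsFractionRing.injective A K ?_⟩
  have hPz : algebraMap A K ∘ P = algebraMap A K d • z :=
    _root_.funext fun i ↦ (hP i).trans (Algebra.smul_def _ _)
  rw [map_toQuadraticForm', hPz, QuadraticMap.map_smul, h, map_mul, map_pow, smul_eq_mul]
  ring

end Matrix

namespace Polynomial

section Field

variable {ι F : Type*} [Fintype ι] [DecidableEq ι] [Field F]

theorem coeff_toQuadraticForm'_map_C (M : Matrix ι ι F) {c : ι → F[X]} {m : ℕ}
    (hc : ∀ i, (c i).natDegree ≤ m) :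
    ((M.map C).toQuadraticForm' c).coeff (m + m) = M.toQuadraticForm' fun i ↦ (c i).coeff m := by
  simp only [toQuadraticForm'_apply, dotProduct, mulVec, map_apply, finsetSum_coeff,
    Finset.mul_sum]
  refine Finset.sum_congr rfl fun i _ ↦ Finset.sum_congr rfl fun j _ ↦ ?_
  rw [mul_left_comm, coeff_C_mul, coeff_mul_add_eq_of_natDegree_le (hc i) (hc j)]
  ring

theorem natDegree_toQuadraticForm'_map_C_le (M : Matrix ι ι F) {c : ι → F[X]} {m : ℕ}
    (hc : ∀ i, (c i).natDegree ≤ m) : ((M.map C).toQuadraticForm' c).natDegree ≤ m + m := by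
  simp only [toQuadraticForm'_apply, dotProduct, mulVec, map_apply, Finset.mul_sum]
  refine natDegree_sum_le_of_forall_le _ _ fun i _ ↦ natDegree_sum_le_of_forall_le _ _
    fun j _ ↦ ?_
  rw [mul_left_comm]
  exact (natDegree_C_mul_le _ _).trans (natDegree_mul_le_of_le (hc i) (hc j))

theorem toQuadraticForm'_map_C_ne_zero_and_even {M : Matrix ι ι F}
    (hM : M.toQuadraticForm'.Anisotropic) {c : ι → F[X]} (hc : c ≠ 0) :
    (M.map C).toQuadraticForm' c ≠ 0 ∧ Even ((M.map C).toQuadraticForm' c).natDegree := by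
  classical
  obtain ⟨i₀, hi₀, hmax⟩ := Finset.exists_max_image {i | c i ≠ 0} (fun i ↦ (c i).natDegree)
    (by simpa [Finset.filter_nonempty_iff, Function.ne_iff] using hc)
  set m := (c i₀).natDegree
  have hdeg : ∀ i, (c i).natDegree ≤ m := fun i ↦ by
    by_cases hi : c i = 0
    · simp [hi]
    · exact hmax i (by simpa using hi)
  have hlead : ((M.map C).toQuadraticForm' c).coeff (m + m) ≠ 0 := by
    rw [coeff_toQuadraticForm'_map_C M hdeg]
    exact fun h ↦ (by simpa using hi₀ : c i₀ ≠ 0)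
      (leadingCoeff_eq_zero.mp (congrFun (hM _ h) i₀))
  refine ⟨fun h ↦ hlead (by rw [h, coeff_zero]), m, ?_⟩
  exact le_antisymm (natDegree_toQuadraticForm'_map_C_le M hdeg) (le_natDegree_of_ne_zero hlead)

theorem anisotropic_fromBlocks_X_smul {M : Matrix ι ι F} (hM : M.toQuadraticForm'.Anisotropic) :
    (fromBlocks (M.map C) 0 0 ((X : F[X]) • M.map C)).toQuadraticForm'.Anisotropic := by
  intro z hz
  obtain ⟨P, Q, rfl⟩ : ∃ P Q, z = Sum.elim P Q :=
    ⟨z ∘ Sum.inl, z ∘ Sum.inr, (Sum.elim_comp_inl_inr z).symm⟩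
  rw [toQuadraticForm'_fromBlocks_zero, toQuadraticForm'_smul] at hz
  have hQ : Q = 0 := by
    by_contra hQ
    obtain ⟨hQ0, hQeven⟩ := toQuadraticForm'_map_C_ne_zero_and_even hM hQ
    have hP : P ≠ 0 := by
      rintro rfl
      simp only [map_zero, zero_add, mul_eq_zero, X_ne_zero, false_or] at hz
      exact hQ0 hz
    have hdeg := congrArg natDegree (eq_neg_of_add_eq_zero_left hz)
    rw [natDegree_neg, natDegree_X_mul hQ0] at hdeg
    exact Nat.not_even_iff_odd.mpr hQeven.add_one
      (hdeg ▸ (toQuadraticForm'_map_C_ne_zero_and_even hM hP).2)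
  subst hQ
  have hP : P = 0 := by
    by_contra hP
    exact (toQuadraticForm'_map_C_ne_zero_and_even hM hP).1 (by simpa using hz)
  subst hP
  ext (i | i) <;> rfl

end Field

section Domain

variable {ι R : Type*} [Fintype ι] [DecidableEq ι] [CommRing R] [IsDomain R]

theorem X_pow_dvd_of_toQuadraticForm'_map_C_eq_X_mul_sq {N : Matrix ι ι R}
    (hN : N.toQuadraticForm'.Anisotropic) (m : ℕ) {P : ι → R[X]} {E : R[X]}
    (h : (N.map C).toQuadraticForm' P = X * E ^ 2) : X ^ m ∣ E := by
  induction m generalizing P E with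
  | zero => exact one_dvd E
  | succ m ih =>
    have hP₀ : eval 0 ∘ P = 0 := by
      apply hN
      have := congrArg (evalRingHom 0) h
      rw [map_toQuadraticForm', Matrix.map_map] at this
      simpa [Function.comp_def] using this
    choose P' hP' using fun i ↦ X_dvd_iff.mpr ((coeff_zero_eq_eval_zero _).trans (congrFun hP₀ i))
    obtain rfl : P = (X : R[X]) • P' := _root_.funext hP'
    rw [QuadraticMap.map_smul, smul_eq_mul, mul_assoc] at h
    have hE : X * (N.map C).toQuadraticForm' P' = E ^ 2 := mul_left_cancel₀ X_ne_zero h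
    obtain ⟨E', rfl⟩ : X ∣ E := prime_X.dvd_of_dvd_pow ⟨_, hE.symm⟩
    have h' : (N.map C).toQuadraticForm' P' = X * E' ^ 2 :=
      mul_left_cancel₀ (X_ne_zero (R := R)) (by rw [hE]; ring)
    rw [pow_succ']
    exact mul_dvd_mul_left X (ih h')

theorem eq_zero_of_toQuadraticForm'_map_C_eq_X_mul_sq {N : Matrix ι ι R}
    (hN : N.toQuadraticForm'.Anisotropic) {P : ι → R[X]} {E : R[X]}
    (h : (N.map C).toQuadraticForm' P = X * E ^ 2) : E = 0 := by
  by_contra hE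
  have := natDegree_le_of_dvd (X_pow_dvd_of_toQuadraticForm'_map_C_eq_X_mul_sq hN
    (E.natDegree + 1) h) hE
  rw [natDegree_X_pow] at this
  omega

end Domain

end Polynomial

namespace QuadraticMap

variable {ι R M : Type*} [Fintype ι] [LinearOrder ι] [CommRing R] [AddCommGroup M] [Module R M]

/-- Triangular rather than symmetric, so that no `⅟2` is needed. -/
noncomputable def basisMatrix (Q : QuadraticForm R M) (b : Module.Basis ι R M) : Matrix ι ι R :=
  LinearMap.toMatrix₂ b b (Q.toBilin b)

theorem basisMatrix_apply (Q : QuadraticForm R M) (b : Module.Basis ι R M) (i j : ι) :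
    Q.basisMatrix b i j = if i = j then Q (b i) else if i < j then polar Q (b i) (b j) else 0 := by
  rw [basisMatrix, LinearMap.toMatrix₂_apply, toBilin_apply]

theorem toQuadraticForm'_basisMatrix_equivFun (Q : QuadraticForm R M) (b : Module.Basis ι R M)
    (x : M) : (Q.basisMatrix b).toQuadraticForm' (b.equivFun x) = Q x := by
  rw [toQuadraticForm'_apply, basisMatrix]
  refine (dotProduct_toMatrix₂_mulVec (σ₁ := RingHom.id R) (σ₂ := RingHom.id R) b b _
    (b.equivFun x) (b.equivFun x)).trans ?_
  rw [b.equivFun.symm_apply_apply]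
  exact congrArg (· x) (toQuadraticMap_toBilin Q b)

theorem Anisotropic.basisMatrix {Q : QuadraticForm R M} (hQ : Q.Anisotropic)
    (b : Module.Basis ι R M) : (Q.basisMatrix b).toQuadraticForm'.Anisotropic := fun c hc ↦ by
  rw [← b.equivFun.apply_symm_apply c, toQuadraticForm'_basisMatrix_equivFun] at hc
  rw [← b.equivFun.apply_symm_apply c, hQ _ hc, map_zero]

theorem basisMatrix_baseChange {k : Type*} [CommRing k] [Algebra k R] {V : Type*}
    [AddCommGroup V] [Module k V] (q : QuadraticForm k V) (b : Module.Basis ι k V)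
    (Q : QuadraticForm R (R ⊗[k] V)) (hQ : ∀ v, Q (1 ⊗ₜ v) = algebraMap k R (q v))
    (hpolar : ∀ v w, polar Q (1 ⊗ₜ v) (1 ⊗ₜ w) = algebraMap k R (polar q v w)) :
    Q.basisMatrix (b.baseChange R) = (q.basisMatrix b).map (algebraMap k R) := by
  ext i j
  simp only [basisMatrix_apply, Matrix.map_apply, Module.Basis.baseChange_apply, hQ, hpolar]
  split_ifs <;> simp

end QuadraticMap

namespace MvPolynomial

variable (k : Type*) [CommRing k]

noncomputable def finTwoAlgEquiv : MvPolynomial (Fin 2) k ≃ₐ[k] k[X][X] :=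
  (renameEquiv k (Equiv.swap 0 1)).trans
    ((finSuccEquiv k 1).trans (Polynomial.mapAlgEquiv (uniqueAlgEquiv k (Fin 1))))

theorem finTwoAlgEquiv_X_zero : finTwoAlgEquiv k (X 0) = Polynomial.C Polynomial.X := by
  have h : (X 1 : MvPolynomial (Fin 2) k) = X (Fin.succ 0) := rfl
  simp [finTwoAlgEquiv, h, finSuccEquiv_X_succ]

theorem finTwoAlgEquiv_X_one : finTwoAlgEquiv k (X 1) = Polynomial.X := by
  simp [finTwoAlgEquiv, finSuccEquiv_X_zero]

theorem finTwoAlgEquiv_C (a : k) :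
    finTwoAlgEquiv k (C a) = Polynomial.C (Polynomial.C a) := by
  rw [← algebraMap_eq, AlgEquiv.commutes, Polynomial.algebraMap_apply, Polynomial.algebraMap_apply,
    Algebra.algebraMap_self, RingHom.id_apply]

theorem map_finTwoAlgEquiv_fromBlocks {n : Type*} (M : Matrix n n k) :
    (fromBlocks (M.map C) 0 0 ((X 0 : MvPolynomial (Fin 2) k) • M.map C)).map
        (finTwoAlgEquiv k) =
      (fromBlocks (M.map Polynomial.C) 0 0 ((Polynomial.X : k[X]) • M.map Polynomial.C)).map
        Polynomial.C := by
  refine Matrix.ext fun i j ↦ ?_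
  rcases i with i | i <;> rcases j with j | j <;>
    simp [finTwoAlgEquiv_C, finTwoAlgEquiv_X_zero]
  exact mul_comm _ _

end MvPolynomial

/-- if `q : V → k` is an anisotropic quadratic form over a field `k` and
`s, t` are independent indeterminates, then over `K = k(s,t)` the quadratic form
`q_K ⊥ s·q_K` does not represent `t`.  Here `K` is realized as the fraction field of
`k[s,t]`, and the base change `q_K` of `q` to `K ⊗[k] V` is characterized by its values
`q_K(a ⊗ v) = a²·q(v)` on pure tensors together with its polar form. -/
theorem stmt_0 (k : Type) [Field k] (V : Type) [AddCommGroup V] [Module k V]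
    [FiniteDimensional k V] (q : QuadraticForm k V) (hq : q.Anisotropic)
    (qK : QuadraticForm (FractionRing (MvPolynomial (Fin 2) k))
      ((FractionRing (MvPolynomial (Fin 2) k)) ⊗[k] V))
    (hqK : ∀ (a : FractionRing (MvPolynomial (Fin 2) k)) (v : V),
      qK (a ⊗ₜ[k] v) = a ^ 2 * algebraMap k (FractionRing (MvPolynomial (Fin 2) k)) (q v))
    (hqKpolar : ∀ (a b : FractionRing (MvPolynomial (Fin 2) k)) (v w : V),
      QuadraticMap.polar qK (a ⊗ₜ[k] v) (b ⊗ₜ[k] w)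
        = a * b * algebraMap k (FractionRing (MvPolynomial (Fin 2) k))
            (QuadraticMap.polar q v w)) :
    ¬ ∃ x y : (FractionRing (MvPolynomial (Fin 2) k)) ⊗[k] V,
        qK x + algebraMap (MvPolynomial (Fin 2) k) (FractionRing (MvPolynomial (Fin 2) k))
            (MvPolynomial.X 0) * qK y
          = algebraMap (MvPolynomial (Fin 2) k) (FractionRing (MvPolynomial (Fin 2) k))
              (MvPolynomial.X 1) := by
  rintro ⟨x, y, hxy⟩
  set A := MvPolynomial (Fin 2) k
  set K := FractionRing A
  set b := Module.finBasis k V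
  set M := q.basisMatrix b
  have hMK : qK.basisMatrix (b.baseChange K) = M.map (algebraMap k K) :=
    QuadraticMap.basisMatrix_baseChange q b qK (fun v ↦ by simp [hqK])
      (fun v w ↦ by simp [hqKpolar])
  set N : Matrix (Fin _ ⊕ Fin _) (Fin _ ⊕ Fin _) A := fromBlocks (M.map MvPolynomial.C) 0 0
    ((MvPolynomial.X 0 : A) • M.map MvPolynomial.C)
  have hN : (N.map (algebraMap A K)).toQuadraticForm'
      (Sum.elim ((b.baseChange K).equivFun x) ((b.baseChange K).equivFun y)) =
      algebraMap A K (MvPolynomial.X 1) := by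
    rw [fromBlocks_map, Matrix.map_zero _ (map_zero _), Matrix.map_smul' _ _ _ (map_mul _),
      toQuadraticForm'_fromBlocks_zero, toQuadraticForm'_smul, Matrix.map_map,
      ← RingHom.coe_comp, ← MvPolynomial.algebraMap_eq, ← IsScalarTower.algebraMap_eq, ← hMK,
      QuadraticMap.toQuadraticForm'_basisMatrix_equivFun,
      QuadraticMap.toQuadraticForm'_basisMatrix_equivFun, hxy]
  obtain ⟨P, d, hd, hPd⟩ := exists_toQuadraticForm'_eq_mul_sq_of_map N hN
  set ψ := (MvPolynomial.finTwoAlgEquiv k).toRingEquiv.toRingHom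
  have hψPd := congrArg ψ hPd
  rw [map_toQuadraticForm', map_mul, map_pow] at hψPd
  rw [show N.map ψ = _ from MvPolynomial.map_finTwoAlgEquiv_fromBlocks k M,
    show ψ (MvPolynomial.X 1) = X from MvPolynomial.finTwoAlgEquiv_X_one k] at hψPd
  exact hd ((map_eq_zero_iff ψ (MvPolynomial.finTwoAlgEquiv k).injective).mp
    (eq_zero_of_toQuadraticForm'_map_C_eq_X_mul_sq
      (anisotropic_fromBlocks_X_smul (hq.basisMatrix b)) hψPd))
end

section
/- Let k be a field of characteristic 2. The Jordan algebra Her₃(k) of symmetric 3×3 matrices over k (with scalars on the diagonal) is homogeneous, i.e., all its isotopes Her₃(k,Γ) for diagonal Γ ∈ GL₃(k) are isomorphic to Her₃(k), if and only if k is perfect (k² = k). Concretely: for every γ ∈ k^×, there exists g ∈ GL₃(k) with g·diag(1,1,γ)·gᵀ a scalar multiple of the identity matrix, if and only if every element of k is a square. -/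
/-!
In characteristic 2 the diagonal entries of `g · diag(1, 1, a) · gᵀ` are the values
`(g i 0 + g i 1)² + a (g i 2)²`, and `(x, y) ↦ x² + a y²` is additive (Frobenius). If `a` is
not a square this map has trivial kernel, so equal diagonal entries force all rows of `g` to
share `g i 0 + g i 1` and `g i 2`; then two columns of `g` are proportional to `(1, 1, 1)` modulo
the first, and `g` is singular. Conversely, if `γ = b²` then `diag(1, 1, b⁻¹)` does the job.
-/

open Matrix

theorem CharTwo.sq_add_mul_sq_injective {k : Type*} [Field k] [CharP k 2] {a : k}
    (ha : ¬ IsSquare a) {x y x' y' : k} (h : x ^ 2 + a * y ^ 2 = x' ^ 2 + a * y' ^ 2) :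
    x = x' ∧ y = y' := by
  have hsum : (x + x') ^ 2 + a * (y + y') ^ 2 = 0 := by
    rw [CharTwo.add_sq, CharTwo.add_sq, mul_add, add_add_add_comm, h, CharTwo.add_self_eq_zero]
  have hy : y + y' = 0 := by
    by_contra hy
    refine ha ⟨(x + x') / (y + y'), ?_⟩
    field_simp
    exact (CharTwo.add_eq_zero.mp hsum).symm
  rw [hy, zero_pow two_ne_zero, mul_zero, add_zero, sq_eq_zero_iff] at hsum
  exact ⟨CharTwo.add_eq_zero.mp hsum, CharTwo.add_eq_zero.mp hy⟩

theorem CharTwo.mul_diagonal_one_one_mul_transpose_apply_self {k : Type*} [CommRing k]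
    [CharP k 2] (M : Matrix (Fin 3) (Fin 3) k) (a : k) (i : Fin 3) :
    (M * diagonal ![1, 1, a] * Mᵀ) i i = (M i 0 + M i 1) ^ 2 + a * M i 2 ^ 2 := by
  rw [mul_apply]
  simp only [mul_diagonal, transpose_apply, Fin.sum_univ_three, cons_val_zero, cons_val_one,
    cons_val_two, head_cons, tail_cons, mul_one]
  linear_combination -(M i 0 * M i 1) * CharTwo.two_eq_zero (R := k)

theorem Matrix.det_fin_three_eq_zero_of_col_add_const_of_col_const {R : Type*} [CommRing R]
    (M : Matrix (Fin 3) (Fin 3) R) {s t : R} (hs : ∀ i, M i 0 + M i 1 = s)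
    (ht : ∀ i, M i 2 = t) : M.det = 0 := by
  have h1 : ∀ i, M i 1 = s - M i 0 := fun i => by rw [← hs i]; ring
  rw [det_fin_three, h1 0, h1 1, h1 2, ht 0, ht 1, ht 2]
  ring

/-- over a field `k` of characteristic 2, the Jordan algebra `Her₃(k)` is
homogeneous iff `k` is perfect.  Concretely: every diagonal form `diag(1,1,γ)` (for
`γ ∈ k^×`) is congruent via some `g ∈ GL₃(k)` to a scalar matrix, iff every element of
`k` is a square. -/
theorem stmt_10 (k : Type) [Field k] [CharP k 2] :
    (∀ γ : kˣ, ∃ (g : Matrix.GeneralLinearGroup (Fin 3) k) (c : k),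
        (g : Matrix (Fin 3) (Fin 3) k) * Matrix.diagonal ![1, 1, (γ : k)]
            * (g : Matrix (Fin 3) (Fin 3) k).transpose
          = c • (1 : Matrix (Fin 3) (Fin 3) k))
      ↔ ∀ a : k, ∃ b : k, b ^ 2 = a := by
  constructor
  · intro H a
    by_contra! hnsq
    have ha : ¬ IsSquare a := fun ⟨b, hb⟩ => hnsq b (by rw [hb, sq])
    have ha0 : a ≠ 0 := fun h => ha (h ▸ IsSquare.zero)
    obtain ⟨g, c, hgc⟩ := H (Units.mk0 a ha0)
    have hdiag : ∀ i, (g.1 i 0 + g.1 i 1) ^ 2 + a * g.1 i 2 ^ 2 = c :=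
      fun i => by
        simpa [CharTwo.mul_diagonal_one_one_mul_transpose_apply_self] using
          congrFun (congrFun hgc i) i
    have hrow := fun i => CharTwo.sq_add_mul_sq_injective ha ((hdiag i).trans (hdiag 0).symm)
    exact g.det_ne_zero <|
      det_fin_three_eq_zero_of_col_add_const_of_col_const _ (fun i => (hrow i).1)
        (fun i => (hrow i).2)
  · intro H γ
    obtain ⟨b, hb⟩ := H γ
    have hb0 : b ≠ 0 := by rintro rfl; exact γ.ne_zero (by simp [← hb])
    refine ⟨.mkOfDetNeZero (diagonal ![1, 1, b⁻¹]) (by simp [Fin.prod_univ_three, hb0]), 1, ?_⟩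
    simp only [GeneralLinearGroup.val_mkOfDetNeZero, diagonal_transpose, diagonal_mul_diagonal,
      one_smul, ← diagonal_one, ← hb]
    congr 1
    ext i
    fin_cases i <;> simp
    field_simp
end

section
/- Let k be a field and W(k) its Witt ring with fundamental ideal I. Let q be a regular quadratic form over k representing 1. If I² ⊆ Ann_{W(k)}(q) (i.e., the Witt class of ⟨⟨γ,δ⟩⟩·q is zero for all γ,δ ∈ k^×), then for every γ ∈ k^×, the form ⟨⟨γ⟩⟩ ⊗ q = q ⊥ (-γ)q is universal, and conversely. -/
/-- The hyperbolic plane `(x, y) ↦ x * y` as a quadratic form on `k × k`. -/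
noncomputable def hyperbolicPlane (k : Type) [Field k] : QuadraticForm k (k × k) :=
  QuadraticMap.linMulLin (LinearMap.fst k k k) (LinearMap.snd k k k)

/-- A quadratic form is hyperbolic if it is equivalent to an orthogonal sum of
hyperbolic planes. -/
def IsHyperbolic {k V : Type} [Field k] [AddCommGroup V] [Module k V]
    (Q : QuadraticForm k V) : Prop :=
  ∃ n : ℕ, QuadraticMap.Equivalent Q (QuadraticMap.pi fun _ : Fin n => hyperbolicPlane k)

/-- `q` is an `n`-fold Pfister quadratic form: it is equivalent to
`⟨⟨a₁,…,aₙ⟩⟩ = ⟨1,-a₁⟩ ⊗ ⋯ ⊗ ⟨1,-aₙ⟩`, realized as the diagonal form whose entries are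
the products `∏_{i ∈ S} (-aᵢ)` over subsets `S ⊆ {1,…,n}`. -/
def IsPfister {k V : Type} [Field k] [AddCommGroup V] [Module k V] (n : ℕ)
    (q : QuadraticForm k V) : Prop :=
  ∃ a : Fin n → k, (∀ i, a i ≠ 0) ∧
    QuadraticMap.Equivalent q
      (QuadraticMap.weightedSumSquares k (fun S : Finset (Fin n) => ∏ i ∈ S, -(a i)))

/-!
Pfister forms are round: every nonzero value they represent is a similarity factor. This goes by
induction on the number of slots, since `⟨⟨a₁,…,aₘ₊₁⟩⟩ ≅ φ ⊥ (-aₘ₊₁)φ` with `φ = ⟨⟨a₁,…,aₘ⟩⟩`,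
and `φ ⊥ βφ` inherits roundness from `φ` through the isometry `⟨x, y⟩ ≅ ⟨x + y, xy(x + y)⟩`.
So `P = ⟨⟨γ⟩⟩ ⊗ q` is round, and `⟨⟨γ, δ⟩⟩ ⊗ q = P ⊥ (-δ)P`.

If `P` represents `δ`, then `(-δ)P ≅ -P`, and `P ⊥ -P` is hyperbolic. Conversely, a hyperbolic
`P ⊥ (-δ)P` has an isotropic vector `(x, y)`, i.e. `P x = δ P y`: if `P y ≠ 0`, roundness turns
this into a representation of `δ`; otherwise `P` itself is isotropic, hence universal as it is
regular.
-/

open QuadraticMap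

namespace QuadraticMap

variable {k V V₁ V₂ : Type*} [Field k] [AddCommGroup V] [Module k V]
  [AddCommGroup V₁] [Module k V₁] [AddCommGroup V₂] [Module k V₂]

theorem Equivalent.smul {Q₁ : QuadraticForm k V₁} {Q₂ : QuadraticForm k V₂} (c : k)
    (h : Q₁.Equivalent Q₂) : (c • Q₁).Equivalent (c • Q₂) :=
  let ⟨f⟩ := h
  ⟨{ f.toLinearEquiv with map_app' := fun m => by simp [f.map_app] }⟩

theorem Equivalent.smul_mul {Q : QuadraticForm k V} {a b : k} (ha : (a • Q).Equivalent Q)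
    (hb : (b • Q).Equivalent Q) : ((a * b) • Q).Equivalent Q := by
  rw [mul_smul]
  exact (hb.smul a).trans ha

theorem mul_self_smul_equivalent (Q : QuadraticForm k V) {t : k} (ht : t ≠ 0) :
    ((t * t) • Q).Equivalent Q :=
  ⟨{ LinearEquiv.smulOfNeZero k V t ht with
    map_app' := fun m => by simp [QuadraticMap.map_smul] }⟩

theorem smul_prod (c : k) (Q₁ : QuadraticForm k V₁) (Q₂ : QuadraticForm k V₂) :
    c • Q₁.prod Q₂ = (c • Q₁).prod (c • Q₂) := by
  ext
  simp [mul_add]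

theorem add_smul_prod_equivalent_smul_prod (φ : QuadraticForm k V) {α β : k}
    (h : α + β ≠ 0) :
    (((α + β) • φ).prod ((α * β * (α + β)) • φ)).Equivalent ((α • φ).prod (β • φ)) := by
  refine ⟨{
    toFun := fun p => (p.1 - β • p.2, p.1 + α • p.2)
    map_add' := fun p q => by ext <;> simp only [Prod.fst_add, Prod.snd_add, smul_add] <;> abel
    map_smul' := fun t p => by ext <;> simp [smul_sub, smul_add, smul_comm t]
    invFun := fun p => ((α + β)⁻¹ • (α • p.1 + β • p.2), (α + β)⁻¹ • (p.2 - p.1))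
    left_inv := fun p => by ext <;> (match_scalars <;> field_simp <;> ring)
    right_inv := fun p => by ext <;> (match_scalars <;> field_simp <;> ring)
    map_app' := fun p => ?_ }⟩
  change α • φ (p.1 - β • p.2) + β • φ (p.1 + α • p.2)
    = (α + β) • φ p.1 + (α * β * (α + β)) • φ p.2
  rw [sub_eq_add_neg, ← neg_smul]
  simp only [QuadraticMap.map_add φ, QuadraticMap.map_smul, polar_smul_right, smul_eq_mul]
  ring

theorem separatingLeft_polarBilin_prod {Q₁ : QuadraticForm k V₁} {Q₂ : QuadraticForm k V₂}
    (h₁ : Q₁.polarBilin.SeparatingLeft) (h₂ : Q₂.polarBilin.SeparatingLeft) :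
    (Q₁.prod Q₂).polarBilin.SeparatingLeft := by
  intro x hx
  ext
  · exact h₁ x.1 fun y => by simpa using hx (y, 0)
  · exact h₂ x.2 fun y => by simpa using hx (0, y)

theorem separatingLeft_polarBilin_smul {Q : QuadraticForm k V}
    (hQ : Q.polarBilin.SeparatingLeft) {c : k} (hc : c ≠ 0) :
    (c • Q).polarBilin.SeparatingLeft :=
  fun x hx => hQ x fun y => by simpa [polar_smul, hc] using hx y

theorem exists_apply_eq_of_isotropic {Q : QuadraticForm k V} (hQ : Q.polarBilin.SeparatingLeft)
    {z : V} (hz : z ≠ 0) (hQz : Q z = 0) (c : k) : ∃ x, Q x = c := by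
  obtain ⟨y, hy⟩ : ∃ y, polar Q z y ≠ 0 := by
    by_contra! h
    exact hz (hQ z h)
  refine ⟨y + ((c - Q y) / polar Q z y) • z, ?_⟩
  rw [QuadraticMap.map_add Q, QuadraticMap.map_smul, polar_smul_right, hQz, polar_comm _ y z]
  simp only [smul_eq_mul, mul_zero, add_zero]
  field_simp
  ring

end QuadraticMap

section Round

variable {k V V₁ V₂ : Type*} [Field k] [AddCommGroup V] [Module k V]
  [AddCommGroup V₁] [Module k V₁] [AddCommGroup V₂] [Module k V₂]

def IsRound (φ : QuadraticForm k V) : Prop :=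
  ∀ c : k, c ≠ 0 → (∃ v, φ v = c) → (c • φ).Equivalent φ

theorem IsRound.of_equivalent {φ : QuadraticForm k V₁} {ψ : QuadraticForm k V₂}
    (h : φ.Equivalent ψ) (hψ : IsRound ψ) : IsRound φ := by
  rintro c hc ⟨v, rfl⟩
  obtain ⟨f⟩ := h
  exact ((Equivalent.smul _ ⟨f⟩).trans (hψ _ hc ⟨f v, f.map_app v⟩)).trans (Equivalent.symm ⟨f⟩)

theorem IsRound.prod_smul {φ : QuadraticForm k V} (hφ : IsRound φ) {β : k} (hβ : β ≠ 0) :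
    IsRound (φ.prod (β • φ)) := by
  have hlift : ∀ a : k, (a • φ).Equivalent φ →
      (a • φ.prod (β • φ)).Equivalent (φ.prod (β • φ)) := fun a ha => by
    rw [smul_prod, smul_comm]
    exact ha.prod (ha.smul β)
  have hβφ : (β • φ.prod (β • φ)).Equivalent (φ.prod (β • φ)) := by
    rw [smul_prod, smul_smul]
    exact ((Equivalent.refl _).prod (mul_self_smul_equivalent φ hβ)).trans
      ⟨IsometryEquiv.prodComm _ _⟩
  rintro c hc ⟨⟨u, v⟩, rfl⟩
  simp only [prod_apply, smul_apply, smul_eq_mul] at hc ⊢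
  set x := φ u
  set y := φ v
  by_cases hy : y = 0
  · rw [hy, mul_zero, add_zero] at hc ⊢
    exact hlift x (hφ x hc ⟨u, rfl⟩)
  have hyφ : (y • φ).Equivalent φ := hφ y hy ⟨v, rfl⟩
  by_cases hx : x = 0
  · rw [hx, zero_add]
    exact hβφ.smul_mul (hlift y hyφ)
  have hxφ : (x • φ).Equivalent φ := hφ x hx ⟨u, rfl⟩
  -- `c = x + βy`, and the twist `⟨x, βy⟩ ≅ ⟨c, xβyc⟩` does the rest
  have e₁ : ((x + β * y) • β • φ).Equivalent ((x * (β * y) * (x + β * y)) • φ) := by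
    rw [smul_smul, show x * (β * y) * (x + β * y) = (x + β * y) * β * (x * y) by ring,
      mul_smul _ (x * y)]
    exact ((hxφ.smul_mul hyφ).smul _).symm
  have e₂ : ((x • φ).prod ((β * y) • φ)).Equivalent (φ.prod (β • φ)) := by
    rw [mul_smul]
    exact hxφ.prod (hyφ.smul β)
  rw [smul_prod]
  exact (((Equivalent.refl _).prod e₁).trans
    (add_smul_prod_equivalent_smul_prod φ hc)).trans e₂

theorem exists_apply_eq_of_smul_equivalent {φ : QuadraticForm k V} {a c : k} {x : V}
    (h : (a • φ).Equivalent φ) (ha : a ≠ 0) (hx : φ x = a * c) : ∃ u, φ u = c := by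
  obtain ⟨g⟩ := h
  refine ⟨g.symm x, mul_left_cancel₀ ha ?_⟩
  rw [← hx, ← g.apply_symm_apply x, g.map_app, smul_apply, smul_eq_mul, g.apply_symm_apply]

theorem IsRound.exists_apply_eq_of_not_anisotropic {φ : QuadraticForm k V} (hφ : IsRound φ)
    (hsep : φ.polarBilin.SeparatingLeft) {c : k}
    (h : ¬ (φ.prod ((-c) • φ)).Anisotropic) : ∃ u, φ u = c := by
  obtain ⟨⟨x, y⟩, hxy, hzero⟩ := (not_anisotropic_iff_exists _).1 h
  simp only [prod_apply, smul_apply, smul_eq_mul] at hzero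
  have hx : φ x = c * φ y := by linear_combination hzero
  by_cases hy : φ y = 0
  · rw [hy, mul_zero] at hx
    by_cases hx0 : x = 0
    · exact exists_apply_eq_of_isotropic hsep (fun hy0 => hxy (by simp [hx0, hy0])) hy c
    · exact exists_apply_eq_of_isotropic hsep hx0 hx c
  · exact exists_apply_eq_of_smul_equivalent (hφ _ hy ⟨y, rfl⟩) hy (by rw [hx, mul_comm])

end Round

section Hyperbolic

variable {k W W₁ W₂ : Type} [Field k] [AddCommGroup W] [Module k W]
  [AddCommGroup W₁] [Module k W₁] [AddCommGroup W₂] [Module k W₂]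

theorem IsHyperbolic.of_equivalent {Q₁ : QuadraticForm k W₁} {Q₂ : QuadraticForm k W₂}
    (h : Q₁.Equivalent Q₂) (hQ₂ : IsHyperbolic Q₂) : IsHyperbolic Q₁ :=
  let ⟨N, hN⟩ := hQ₂
  ⟨N, h.trans hN⟩

theorem IsHyperbolic.not_anisotropic [Nontrivial W] {Q : QuadraticForm k W}
    (h : IsHyperbolic Q) : ¬ Q.Anisotropic := by
  obtain ⟨N, ⟨f⟩⟩ := h
  obtain ⟨N, rfl⟩ : ∃ N', N = N' + 1 := by
    refine Nat.exists_eq_succ_of_ne_zero fun hN => ?_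
    subst hN
    exact not_subsingleton W f.toLinearEquiv.injective.subsingleton
  let v : Fin (N + 1) → k × k := fun _ => (1, 0)
  rw [not_anisotropic_iff_exists]
  refine ⟨f.symm v, fun hv => ?_, ?_⟩
  · simpa [v] using congrFun (f.symm.injective (hv.trans (map_zero f.symm).symm)) 0
  · rw [f.symm.map_app]
    simp [v, hyperbolicPlane]

theorem isHyperbolic_weightedSumSquares_prod_neg (h2 : (2 : k) ≠ 0) {r : ℕ} (u : Fin r → kˣ) :
    IsHyperbolic ((weightedSumSquares k u).prod ((-1 : k) • weightedSumSquares k u)) := by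
  refine ⟨r, ⟨{
    toFun := fun p i => (u i * (p.1 i - p.2 i), p.1 i + p.2 i)
    map_add' := fun p q => by funext i; ext <;> simp <;> ring
    map_smul' := fun t p => by funext i; ext <;> simp <;> ring
    invFun := fun f => (fun i => (2 : k)⁻¹ * ((u i : k)⁻¹ * (f i).1 + (f i).2),
      fun i => (2 : k)⁻¹ * ((f i).2 - (u i : k)⁻¹ * (f i).1))
    left_inv := fun p => by
      refine Prod.ext ?_ ?_ <;> funext i <;> field_simp <;> ring
    right_inv := fun f => by
      funext i
      refine Prod.ext ?_ ?_ <;> field_simp <;> ring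
    map_app' := fun p => ?_ }⟩⟩
  simp only [pi_apply, prod_apply, smul_apply, weightedSumSquares_apply, hyperbolicPlane,
    linMulLin_apply, LinearMap.fst_apply, LinearMap.snd_apply, Units.smul_def, smul_eq_mul,
    Finset.mul_sum, ← Finset.sum_add_distrib]
  exact Finset.sum_congr rfl fun i _ => by ring

theorem isHyperbolic_prod_neg_one_smul [FiniteDimensional k W] (h2 : (2 : k) ≠ 0)
    {Q : QuadraticForm k W} (hQ : Q.polarBilin.SeparatingLeft) :
    IsHyperbolic (Q.prod ((-1 : k) • Q)) := by
  have : Invertible (2 : k) := invertibleOfNonzero h2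
  obtain ⟨u, hu⟩ := QuadraticForm.equivalent_weightedSumSquares_units_of_nondegenerate' Q
    fun x hx => hQ x fun y => by simpa [associated_apply, polar, h2] using hx y
  exact (isHyperbolic_weightedSumSquares_prod_neg h2 u).of_equivalent (hu.prod (hu.smul _))

end Hyperbolic

section Pfister

variable {k : Type*} [Field k]

noncomputable def finsetFinSuccEquiv (m : ℕ) :
    Finset (Fin m) ⊕ Finset (Fin m) ≃ Finset (Fin (m + 1)) where
  toFun := Sum.elim (·.map Fin.castSuccEmb) fun S => insert (Fin.last m) (S.map Fin.castSuccEmb)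
  invFun T :=
    let S := T.preimage Fin.castSucc (Fin.castSucc_injective m).injOn
    if Fin.last m ∈ T then .inr S else .inl S
  left_inv := by
    rintro (S | S) <;> simp [Finset.ext_iff]
  right_inv T := by
    by_cases h : Fin.last m ∈ T <;> ext i <;> cases i using Fin.lastCases <;> simp [h]

theorem weightedSumSquares_equivalent_prod {ι ι₁ ι₂ : Type*} [Fintype ι] [Fintype ι₁]
    [Fintype ι₂] (w : ι → k) (e : ι₁ ⊕ ι₂ ≃ ι) :
    (weightedSumSquares k w).Equivalent
      ((weightedSumSquares k (w ∘ e ∘ Sum.inl)).prod (weightedSumSquares k (w ∘ e ∘ Sum.inr))) :=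
  ⟨{ (LinearEquiv.funCongrLeft k k e).trans (LinearEquiv.sumArrowLequivProdArrow ι₁ ι₂ k k) with
    map_app' := fun v => by
      simp [weightedSumSquares_apply, ← e.sum_comp (fun i => w i * (v i * v i)),
        LinearEquiv.funCongrLeft_apply] }⟩

theorem smul_weightedSumSquares {ι : Type*} [Fintype ι] (c : k) (w : ι → k) :
    c • weightedSumSquares k w = weightedSumSquares k fun i => c * w i := by
  ext v
  simp [weightedSumSquares_apply, Finset.mul_sum, mul_assoc]

def pfisterForm {n : ℕ} (a : Fin n → k) : QuadraticForm k (Finset (Fin n) → k) :=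
  weightedSumSquares k fun S => ∏ i ∈ S, -a i

theorem pfisterForm_succ_equivalent {m : ℕ} (a : Fin (m + 1) → k) :
    (pfisterForm a).Equivalent
      ((pfisterForm (Fin.init a)).prod ((-a (Fin.last m)) • pfisterForm (Fin.init a))) := by
  unfold pfisterForm
  convert weightedSumSquares_equivalent_prod _ (finsetFinSuccEquiv m) using 2
  · simp [finsetFinSuccEquiv, Function.comp_def, Fin.init]
  · simp [smul_weightedSumSquares, finsetFinSuccEquiv, Function.comp_def, Fin.init]

theorem isRound_pfisterForm {n : ℕ} (a : Fin n → k) (ha : ∀ i, a i ≠ 0) :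
    IsRound (pfisterForm a) := by
  induction n with
  | zero =>
    rintro c hc ⟨v, rfl⟩
    have hv : pfisterForm a v = v ∅ * v ∅ := by
      simp [pfisterForm, weightedSumSquares_apply, Finset.prod_of_isEmpty, Unique.eq_default ∅]
    rw [hv] at hc ⊢
    exact mul_self_smul_equivalent _ (left_ne_zero_of_mul hc)
  | succ m ih =>
    exact IsRound.of_equivalent (pfisterForm_succ_equivalent a)
      ((ih (Fin.init a) fun i => ha _).prod_smul (neg_ne_zero.2 (ha _)))

end Pfister

theorem IsPfister.isRound {k V : Type} [Field k] [AddCommGroup V] [Module k V] {n : ℕ}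
    {q : QuadraticForm k V} (h : IsPfister n q) : IsRound q :=
  let ⟨a, ha, hq⟩ := h
  IsRound.of_equivalent hq (isRound_pfisterForm a ha)

/-- let `q` be a regular (`n`-fold Pfister) quadratic form over `k`
(char `k ≠ 2`) representing `1`.  Then `I² ⊆ Ann_{W(k)}(q)` — i.e. the Witt class of
`⟨⟨γ,δ⟩⟩ ⊗ q` is zero (the form is hyperbolic) for all `γ, δ ∈ k^×` — if and only if for
every `γ ∈ k^×` the form `⟨⟨γ⟩⟩ ⊗ q = q ⊥ (-γ)q` is universal. -/
theorem stmt_17 (k V : Type) [Field k] (h2 : (2 : k) ≠ 0)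
    [AddCommGroup V] [Module k V] [FiniteDimensional k V]
    (q : QuadraticForm k V)
    (hreg : (QuadraticMap.polarBilin q).Nondegenerate)
    (hone : ∃ e : V, q e = 1)
    (n : ℕ) (hpf : IsPfister n q) :
    (∀ γ δ : k, γ ≠ 0 → δ ≠ 0 →
        IsHyperbolic ((q.prod ((-γ) • q)).prod (((-δ) • q).prod ((γ * δ) • q))))
      ↔ (∀ γ : k, γ ≠ 0 → ∀ c : k, c ≠ 0 → ∃ z : V × V, (q.prod ((-γ) • q)) z = c) := by
  have hP : ∀ γ : k, γ ≠ 0 → IsRound (q.prod ((-γ) • q)) ∧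
      (q.prod ((-γ) • q)).polarBilin.SeparatingLeft := fun γ hγ =>
    ⟨hpf.isRound.prod_smul (neg_ne_zero.2 hγ), separatingLeft_polarBilin_prod hreg.1
      (separatingLeft_polarBilin_smul hreg.1 (neg_ne_zero.2 hγ))⟩
  have hfold : ∀ γ δ : k, ((-δ) • q).prod ((γ * δ) • q) = (-δ) • q.prod ((-γ) • q) := by
    intro γ δ
    rw [smul_prod, smul_smul, neg_mul_neg, mul_comm δ]
  obtain ⟨e, he⟩ := hone
  have : Nontrivial V := ⟨e, 0, fun h => by simp [h] at he⟩
  constructor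
  · intro H γ hγ c hc
    obtain ⟨hround, hsep⟩ := hP γ hγ
    have hyp := H γ c hγ hc
    rw [hfold] at hyp
    exact hround.exists_apply_eq_of_not_anisotropic hsep hyp.not_anisotropic
  · intro H γ δ hγ hδ
    obtain ⟨hround, hsep⟩ := hP γ hγ
    have hδP := hround δ hδ (H γ hγ δ hδ)
    rw [hfold, neg_eq_neg_one_mul δ, mul_smul]
    exact (isHyperbolic_prod_neg_one_smul h2 hsep).of_equivalent
      ((Equivalent.refl _).prod (hδP.smul _))
end
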